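/- If κ is a Π¹ₙ-indescribable cardinal and Z is a subset of κ belonging to the Π¹ₙ-indescribable ideal (i.e., Z is not Π¹ₙ-indescribable), then the trace Trₙ(Z) = {α < κ : Z ∩ α is a Π¹ₙ-indescribable subset of α} also belongs to the Π¹ₙ-indescribable ideal. -/

import Mathlib

noncomputable section

open Classical

attribute [local instance] Classical.allZFSetDefinable

namespace Paper

/-! ### Von Neumann ordinals and the cumulative hierarchy inside `ZFSet` -/

/-- The von Neumann ordinal corresponding to an `Ordinal`. -/
noncomputable def ordToZF (o : Ordinal.{0}) : ZFSet.{0} :=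
  ZFSet.range fun i : o.ToType => ordToZF ((@Ordinal.ToType.mk o).symm i)
termination_by o
decreasing_by exact ((@Ordinal.ToType.mk o).symm i).2

/-- The rank-initial segment `V_o` of the cumulative hierarchy, as a `ZFSet`. -/
noncomputable def Vrank (o : Ordinal.{0}) : ZFSet.{0} :=
  ZFSet.sUnion (ZFSet.range fun i : o.ToType =>
    ZFSet.powerset (Vrank ((@Ordinal.ToType.mk o).symm i)))
termination_by o
decreasing_by exact ((@Ordinal.ToType.mk o).symm i).2

/-! ### Second-order formulas over a structure `(D, ∈, A)` -/

/-- Formulas of second-order set theory in the language `{∈, =, A}` with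
first-order variables `xᵢ` and second-order (unary predicate) variables `Xᵢ`. -/
inductive SOForm : Type
  | mem : ℕ → ℕ → SOForm        -- xᵢ ∈ xⱼ
  | eq : ℕ → ℕ → SOForm         -- xᵢ = xⱼ
  | inA : ℕ → SOForm            -- A(xᵢ), the distinguished unary predicate
  | inS : ℕ → ℕ → SOForm        -- Xᵢ(xⱼ)
  | not : SOForm → SOForm
  | and : SOForm → SOForm → SOForm
  | allV : ℕ → SOForm → SOForm  -- ∀ xᵢ
  | allS : ℕ → SOForm → SOForm  -- ∀ Xᵢ

/-- Satisfaction of a second-order formula in the structure `(D, ∈, A)`, where the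
second-order quantifiers and assignments range over subsets of `D` lying in the class `Wu`
(taking `Wu = Set.univ` gives full second-order satisfaction). -/
def SOSat (D A : ZFSet) (Wu : Set ZFSet) : (ℕ → ZFSet) → (ℕ → ZFSet) → SOForm → Prop
  | v, _, .mem i j => v i ∈ v j
  | v, _, .eq i j => v i = v j
  | v, _, .inA i => v i ∈ A
  | v, s, .inS i j => v j ∈ s i
  | v, s, .not φ => ¬ SOSat D A Wu v s φ
  | v, s, .and φ ψ => SOSat D A Wu v s φ ∧ SOSat D A Wu v s ψ
  | v, s, .allV i φ => ∀ x : ZFSet, x ∈ D → SOSat D A Wu (Function.update v i x) s φ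
  | v, s, .allS i φ => ∀ X : ZFSet, X ⊆ D → X ∈ Wu → SOSat D A Wu v (Function.update s i X) φ

/-- First-order formulas: no second-order variables or quantifiers. -/
def IsFO : SOForm → Prop
  | .mem _ _ => True
  | .eq _ _ => True
  | .inA _ => True
  | .inS _ _ => False
  | .not φ => IsFO φ
  | .and φ ψ => IsFO φ ∧ IsFO ψ
  | .allV _ φ => IsFO φ
  | .allS _ _ => False

/-- The class of `Π¹ₙ` formulas:  `Π¹₀` formulas are first-order, and `Π¹ₙ₊₁` formulas
are built from `Π¹ₙ` formulas and their negations (`Σ¹ₙ` formulas) by universal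
second-order quantification. -/
inductive IsPiForm : ℕ → SOForm → Prop
  | fo {φ} : IsFO φ → IsPiForm 0 φ
  | up {n φ} : IsPiForm n φ → IsPiForm (n + 1) φ
  | neg {n φ} : IsPiForm n φ → IsPiForm (n + 1) (SOForm.not φ)
  | all {n i φ} : IsPiForm (n + 1) φ → IsPiForm (n + 1) (SOForm.allS i φ)

/-- Truth of a formula in `(D, ∈, A)` (under every assignment ranging in `D`,
with second-order assignments ranging over the subsets of `D` lying in `Wu`). -/
def SOTrue (D A : ZFSet) (Wu : Set ZFSet) (φ : SOForm) : Prop :=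
  ∀ v : ℕ → ZFSet, (∀ i, v i ∈ D) → ∀ s : ℕ → ZFSet, (∀ i, s i ⊆ D ∧ s i ∈ Wu) →
    SOSat D A Wu v s φ

/-! ### Π¹ₙ-indescribability -/

/-- `S ⊆ κ` is a `Π¹ₙ`-indescribable subset of `κ`, relative to the universe class `Wu`
(the predicates `A` and the second-order quantifiers range over members of `Wu`);
`Wu = Set.univ` gives the usual notion, and `Wu = M.toSet` gives the notion
as computed in a transitive model `M`. -/
def PiIndescribableIn (Wu : Set ZFSet) (n : ℕ) (κ : Ordinal) (S : Set Ordinal) : Prop :=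
  ∀ A : ZFSet, A ∈ Wu → A ⊆ Vrank κ → ∀ φ : SOForm, IsPiForm n φ →
    SOTrue (Vrank κ) A Wu φ →
      ∃ α ∈ S, α < κ ∧ SOTrue (Vrank α) (A ∩ Vrank α) Wu φ

/-- `S ⊆ κ` is a `Π¹ₙ`-indescribable subset of `κ`. -/
def PiIndescribable (n : ℕ) (κ : Ordinal) (S : Set Ordinal) : Prop :=
  PiIndescribableIn Set.univ n κ S

/-- `κ` is a `Π¹ₙ`-indescribable cardinal. -/
def PiIndCard (n : ℕ) (κ : Ordinal) : Prop :=
  PiIndescribable n κ (Set.Iio κ)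

/-- The trace operation `Trₙ(X) = {α < κ : X ∩ α is Π¹ₙ-indescribable in α}`. -/
def Tr (n : ℕ) (κ : Ordinal) (X : Set Ordinal) : Set Ordinal :=
  {α | α < κ ∧ PiIndescribable n α (X ∩ Set.Iio α)}

/-- The `Π¹ₙ`-reflection principle `Reflₙ(κ)`. -/
def ReflPrin (n : ℕ) (κ : Ordinal) : Prop :=
  PiIndCard n κ ∧ ∀ S : Set Ordinal, S ⊆ Set.Iio κ → PiIndescribable n κ S →
    ∃ γ < κ, PiIndescribable n γ (S ∩ Set.Iio γ)

/-- Weakly compact (= Π¹₁-indescribable) subset of `κ`. -/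
def WCSet (κ : Ordinal) (S : Set Ordinal) : Prop := PiIndescribable 1 κ S

/-- Weakly compact cardinal. -/
def WCCard (κ : Ordinal) : Prop := PiIndCard 1 κ

/-- The weakly compact reflection principle `Refl_wc(κ)`. -/
def ReflWC (κ : Ordinal) : Prop := ReflPrin 1 κ

end Paper
namespace Paper

/-! ### Transitive models, κ-models, elementary embeddings -/

/-- `r` is (a code for) a well-ordering of the set `x`. -/
def IsWellOrderingOn (r x : ZFSet) : Prop :=
  (∀ p, p ∈ r → ∃ u, u ∈ x ∧ ∃ w, w ∈ x ∧ p = ZFSet.pair u w) ∧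
  (∀ u, u ∈ x → ∀ w, w ∈ x → u ≠ w → (ZFSet.pair u w ∈ r ∨ ZFSet.pair w u ∈ r)) ∧
  (∀ u v w : ZFSet, ZFSet.pair u v ∈ r → ZFSet.pair v w ∈ r → ZFSet.pair u w ∈ r) ∧
  WellFounded (fun u w : ZFSet => ZFSet.pair u w ∈ r)

/-- `M` is a (transitive) model of `ZFC⁻` (ZFC without the power set axiom),
rendered semantically: closure under pairing and union, infinity,
the separation and replacement schemes for first-order formulas, and choice. -/
structure ModelsZFCminus (M : ZFSet) : Prop where
  infty : ZFSet.omega ∈ M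
  pairing : ∀ x, x ∈ M → ∀ y, y ∈ M → ({x, y} : ZFSet) ∈ M
  union : ∀ x, x ∈ M → ZFSet.sUnion x ∈ M
  separation : ∀ φ, IsFO φ → ∀ v : ℕ → ZFSet, (∀ i, v i ∈ M) → ∀ a, a ∈ M →
    ZFSet.sep (fun x => SOSat M ∅ Set.univ (Function.update v 0 x) (fun _ => ∅) φ) a ∈ M
  replacement : ∀ φ, IsFO φ → ∀ v : ℕ → ZFSet, (∀ i, v i ∈ M) → ∀ a, a ∈ M →
    (∀ x, x ∈ a → ∃! y, y ∈ M ∧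
      SOSat M ∅ Set.univ (Function.update (Function.update v 0 x) 1 y) (fun _ => ∅) φ) →
    ∃ b, b ∈ M ∧ ∀ x, x ∈ a → ∃ y, y ∈ b ∧
      SOSat M ∅ Set.univ (Function.update (Function.update v 0 x) 1 y) (fun _ => ∅) φ
  choice : ∀ x, x ∈ M → ∃ r, r ∈ M ∧ IsWellOrderingOn r x

/-- `M` is a model of full `ZFC`: `ZFC⁻` together with the power set axiom
(the power set of `x` as computed in `M` is `P(x) ∩ M`). -/
structure ModelsZFC (M : ZFSet) : Prop where
  zfcMinus : ModelsZFCminus M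
  powerset : ∀ x, x ∈ M → ZFSet.sep (fun z => z ∈ M) (ZFSet.powerset x) ∈ M

/-- `M` is a `κ`-model: a transitive model of `ZFC⁻` of size `κ` with `κ ∈ M`
which is closed under `<κ`-sequences (from the ambient universe). -/
structure IsKappaModel (κ : Ordinal.{0}) (M : ZFSet.{0}) : Prop where
  transitive : M.IsTransitive
  zfcMinus : ModelsZFCminus M
  card : Cardinal.mk M.toSet = Cardinal.lift.{1} κ.card
  kappa_mem : ordToZF κ ∈ M
  closed : ∀ β : Ordinal, β < κ → ∀ f : ZFSet, ZFSet.IsFunc (ordToZF β) M f → f ∈ M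

/-- `j` is an elementary embedding from the transitive model `M` into the
transitive model `N` (in the first-order language of set theory). -/
def IsElemEmb (M N : ZFSet) (j : ZFSet → ZFSet) : Prop :=
  (∀ x, x ∈ M → j x ∈ N) ∧
  ∀ φ : SOForm, IsFO φ → ∀ v : ℕ → ZFSet, (∀ i, v i ∈ M) →
    (SOSat M ∅ Set.univ v (fun _ => ∅) φ ↔ SOSat N ∅ Set.univ (fun i => j (v i)) (fun _ => ∅) φ)

/-- `j` has critical point `κ`: it fixes all ordinals below `κ` and moves `κ`. -/
def CritPoint (κ : Ordinal) (j : ZFSet → ZFSet) : Prop :=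
  (∀ α : Ordinal, α < κ → j (ordToZF α) = ordToZF α) ∧ j (ordToZF κ) ≠ ordToZF κ

/-- The code of a set `S` of ordinals below `κ` as a `ZFSet`. -/
noncomputable def setToZF (κ : Ordinal) (S : Set Ordinal) : ZFSet :=
  ZFSet.sep (fun x => ∃ α ∈ S, x = ordToZF α) (ordToZF κ)

end Paper
namespace Paper

/-! ### Forcing notions coded as `ZFSet`s, generic filters, and generic extensions -/

/-- A forcing notion coded in the `ZFSet` universe: a carrier set of conditions
together with a set of (Kuratowski) pairs coding the order `p ≤ q`. -/
structure ZPoset where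
  carrier : ZFSet.{0}
  rel : ZFSet.{0}

/-- `p ≤ q` in the coded poset `P`. -/
def ZPoset.le (P : ZPoset) (p q : ZFSet) : Prop := ZFSet.pair p q ∈ P.rel

/-- The coded poset `P` belongs to the model `M`. -/
def ZPoset.memModel (P : ZPoset) (M : ZFSet) : Prop := P.carrier ∈ M ∧ P.rel ∈ M

/-- `D` is a dense subset of (the carrier of) `P`. -/
def ZPoset.DenseSub (P : ZPoset) (D : ZFSet) : Prop :=
  D ⊆ P.carrier ∧ ∀ p, p ∈ P.carrier → ∃ q, q ∈ D ∧ P.le q p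

/-- `G` is a filter on the coded poset `P`. -/
def ZPoset.IsFilter (P : ZPoset) (G : Set ZFSet) : Prop :=
  G ⊆ P.carrier.toSet ∧
  (∀ p ∈ G, ∀ q, q ∈ P.carrier → P.le p q → q ∈ G) ∧
  (∀ p ∈ G, ∀ q ∈ G, ∃ r ∈ G, P.le r p ∧ P.le r q)

/-- `G` is a filter on `P` generic over the model `M`: it meets every dense
subset of `P` that belongs to `M`. -/
def GenericOver (M : ZFSet) (P : ZPoset) (G : Set ZFSet) : Prop :=
  P.IsFilter G ∧ ∀ D : ZFSet, D ∈ M → P.DenseSub D → ∃ p ∈ G, p ∈ D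

/-- Evaluation of a `P`-name `τ` by the filter `G`:
`val_G(τ) = { val_G(σ) : ∃ p ∈ G, (σ, p) ∈ τ }` (by `∈`-recursion). -/
noncomputable def zval (G : Set ZFSet) : ZFSet → ZFSet :=
  WellFounded.fix (ZFSet.mem_wf.transGen)
    (fun τ ih =>
      ZFSet.image
        (fun σ => if h : Relation.TransGen (· ∈ · : ZFSet → ZFSet → Prop) σ τ then ih σ h else ∅)
        (ZFSet.sep (fun σ => ∃ p, p ∈ G ∧ ZFSet.pair σ p ∈ τ)
          (ZFSet.sUnion (ZFSet.sUnion τ))))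

/-- The generic extension `M[G]`: the set of evaluations of all names in `M`. -/
noncomputable def genExt (M : ZFSet) (G : Set ZFSet) : ZFSet :=
  ZFSet.image (zval G) M

/-! ### Games and strategic closure -/

/-- An ordinal is even iff it is of the form `λ + 2n` with `λ` zero or a limit. -/
def EvenOrd (o : Ordinal) : Prop :=
  ∃ l : Ordinal, ∃ n : ℕ, (l = 0 ∨ Order.IsSuccLimit l) ∧ o = l + 2 * n

/-- `f` is a legal (descending) play of length `α` in the coded poset `P`. -/
def ZPoset.IsPlay (P : ZPoset) (α : Ordinal) (f : Ordinal → ZFSet) : Prop :=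
  (∀ β, β < α → f β ∈ P.carrier) ∧
  ∀ β γ, β ≤ γ → γ < α → P.le (f γ) (f β)

/-- `σ` is a winning strategy for Player II (who plays at even stages, including limits)
in the game of length `κ` on the coded poset `P`: at every even stage of every legal play
following `σ`, Player II can continue the play. -/
def ZPoset.WinningStrat (P : ZPoset) (κ : Ordinal) (σ : Ordinal → (Ordinal → ZFSet) → ZFSet) : Prop :=
  (∀ β f g, (∀ γ, γ < β → f γ = g γ) → σ β f = σ β g) ∧
  ∀ α, α < κ → EvenOrd α → ∀ f, P.IsPlay α f → (∀ β, β < α → EvenOrd β → f β = σ β f) →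
    σ α f ∈ P.carrier ∧ ∀ β, β < α → P.le (σ α f) (f β)

/-- The coded poset `P` is `κ`-strategically closed. -/
def ZPoset.StratClosed (P : ZPoset) (κ : Ordinal) : Prop :=
  ∃ σ, P.WinningStrat κ σ

/-- Function application for `ZFSet`-coded functions. -/
noncomputable def zapp (f x : ZFSet) : ZFSet :=
  ZFSet.sUnion (ZFSet.sep (fun y => ZFSet.pair x y ∈ f) (ZFSet.sUnion (ZFSet.sUnion f)))

/-- Restriction of a `ZFSet`-coded function on ordinals to the ordinals below `β`. -/
noncomputable def zrestrict (f : ZFSet) (β : Ordinal) : ZFSet :=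
  ZFSet.sep (fun p => ∃ γ, γ < β ∧ ∃ y, p = ZFSet.pair (ordToZF γ) y) f

/-- `s` is a (coded) winning strategy for Player II in the game of length `κ` on `P`,
where plays are coded as `ZFSet` functions. -/
def ZPoset.CodedWinningStrat (P : ZPoset) (κ : Ordinal) (s : ZFSet) : Prop :=
  ∀ α, α < κ → EvenOrd α → ∀ f : ZFSet, ZFSet.IsFunc (ordToZF α) P.carrier f →
    (∀ β γ, β ≤ γ → γ < α → P.le (zapp f (ordToZF γ)) (zapp f (ordToZF β))) →
    (∀ β, β < α → EvenOrd β → zapp f (ordToZF β) = zapp s (zrestrict f β)) →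
    zapp s f ∈ P.carrier ∧ ∀ β, β < α → P.le (zapp s f) (zapp f (ordToZF β))

/-- `P` is `κ`-strategically closed in the sense of the model `V₀`:
there is a winning strategy for Player II which belongs to `V₀`. -/
def ZPoset.StratClosedIn (P : ZPoset) (V₀ : ZFSet) (κ : Ordinal) : Prop :=
  ∃ s, s ∈ V₀ ∧ P.CodedWinningStrat κ s

/-- `P` is `κ`-c.c.: every antichain has size `< κ`. -/
def ZPoset.KappaCC (P : ZPoset) (κ : Ordinal) : Prop :=
  ∀ A : Set ZFSet, A ⊆ P.carrier.toSet →
    (∀ p ∈ A, ∀ q ∈ A, p ≠ q → ¬ ∃ r, r ∈ P.carrier ∧ P.le r p ∧ P.le r q) →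
    Cardinal.mk A < Cardinal.lift.{1, 0} κ.card

/-- `P` is `≤κ`-distributive over the model `V₀`: forcing with `P` over `V₀` adds no new
function from `κ` into the ground model `V₀`. -/
def ZPoset.LeKappaDistributiveOver (P : ZPoset) (V₀ : ZFSet) (κ : Ordinal) : Prop :=
  ∀ G : Set ZFSet, GenericOver V₀ P G →
    ∀ f, f ∈ genExt V₀ G → ∀ y, y ∈ V₀ → ZFSet.IsFunc (ordToZF κ) y f → f ∈ V₀

end Paper
namespace Paper

/-! ### Orders of Π¹ₙ-indescribability and iterated traces -/

/-- Hellsten's ordering `S <ⁿ T` on `Π¹ₙ`-indescribable subsets of `κ`: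
`T \ Trₙ(S)` lies in the `Π¹ₙ`-indescribable ideal. -/
def ltnRel (n : ℕ) (κ : Ordinal) (S T : Set Ordinal) : Prop :=
  PiIndescribable n κ S ∧ PiIndescribable n κ T ∧
    ¬ PiIndescribable n κ (T \ Tr n κ S)

/-- The order `oₙ(κ)` of a `Π¹ₙ`-indescribable cardinal `κ`: the height of the
well-founded partial order `<ⁿ`, i.e. `sup { rank(S) + 1 : S ∈ Π¹ₙ(κ)⁺ }`. -/
noncomputable def heightOrder (n : ℕ) (κ : Ordinal) (hwf : WellFounded (ltnRel n κ)) : Ordinal.{1} :=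
  ⨆ S : {S : Set Ordinal // PiIndescribable n κ S},
    Order.succ (@IsWellFounded.rank (Set Ordinal) (ltnRel n κ) ⟨hwf⟩ S.1)

/-- An injection (chosen by choice, when one exists) of the ordinals below `o`
into the ordinals below `κ`; used to index diagonal intersections. -/
noncomputable def injOrd (o κ : Ordinal.{0}) (β : Ordinal) : Ordinal :=
  if h : Nonempty (o.ToType ↪ κ.ToType) then
    if hb : β < o then
      ((@Ordinal.ToType.mk κ).symm (h.some ((@Ordinal.ToType.mk o) ⟨β, hb⟩))).1
    else 0
  else 0

/-- Diagonal intersection (as a subset of `κ`) of a family of sets indexed by the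
ordinals below `o`, via the injection `injOrd o κ`. -/
noncomputable def diagInterAt (κ o : Ordinal) (A : ∀ β, β < o → Set Ordinal) : Set Ordinal :=
  {ξ | ξ < κ ∧ ∀ β (h : β < o), injOrd o κ β < ξ → ξ ∈ A β h}

/-- The iterated trace `Trₙ^o([κ])`, with diagonal intersections at limits
(a choice of representatives of the corresponding equivalence classes in
`P(κ)/Π¹ₙ(κ)`). -/
noncomputable def TrIter (n : ℕ) (κ : Ordinal) (o : Ordinal) : Set Ordinal :=
  Ordinal.limitRecOn o (Set.Iio κ) (fun _ ih => Tr n κ ih) (fun o' _ ih => diagInterAt κ o' ih)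

/-! ### Relativized weak compactness and related notions in transitive models -/

/-- `S` is a weakly compact subset of `κ` in the sense of the transitive model `M`. -/
def WCSetIn (M : ZFSet) (κ : Ordinal) (S : Set Ordinal) : Prop :=
  PiIndescribableIn M.toSet 1 κ S

/-- `κ` is a weakly compact cardinal in the sense of the transitive model `M`. -/
def WCCardIn (M : ZFSet) (κ : Ordinal) : Prop :=
  WCSetIn M κ (Set.Iio κ)

/-- The weakly compact reflection principle `Refl_wc(κ)` in the sense of the model `M`. -/
def ReflWCIn (M : ZFSet) (κ : Ordinal) : Prop :=
  WCCardIn M κ ∧ ∀ S : Set Ordinal, S ⊆ Set.Iio κ → setToZF κ S ∈ M →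
    WCSetIn M κ S → ∃ γ < κ, WCSetIn M γ (S ∩ Set.Iio γ)

/-- The trace operation relativized to the model `M`. -/
def TrIn (M : ZFSet) (κ : Ordinal) (X : Set Ordinal) : Set Ordinal :=
  {β | β < κ ∧ WCSetIn M β (X ∩ Set.Iio β)}

/-- The iterated weakly compact trace `Tr_wc^o([κ])` as computed in the model `M`. -/
noncomputable def TrIterIn (M : ZFSet) (κ : Ordinal) (o : Ordinal) : Set Ordinal :=
  Ordinal.limitRecOn o (Set.Iio κ) (fun _ ih => TrIn M κ ih) (fun o' _ ih => diagInterAt κ o' ih)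

/-- `f` codes an injective function from `a` to `b`. -/
def zinj (f a b : ZFSet) : Prop :=
  ZFSet.IsFunc a b f ∧ ∀ u v w : ZFSet, ZFSet.pair u w ∈ f → ZFSet.pair v w ∈ f → u = v

/-- `f` codes a surjective function from `a` onto `b`. -/
def zsurj (f a b : ZFSet) : Prop :=
  ZFSet.IsFunc a b f ∧ ∀ y, y ∈ b → ∃ x, x ∈ a ∧ ZFSet.pair x y ∈ f

/-- The GCH as computed in the transitive model `M`: for every infinite `x ∈ M`,
the least ordinal `α` not injectable into `x` (within `M`), i.e. `|x|⁺` of `M`,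
surjects (within `M`) onto the power set of `x` as computed in `M`. -/
def GCHIn (M : ZFSet) : Prop :=
  ∀ x, x ∈ M → ¬ x.toSet.Finite →
    ∃ α : Ordinal, ordToZF α ∈ M ∧
      (∀ g, g ∈ M → ¬ zinj g (ordToZF α) x) ∧
      (∀ β, β < α → ∃ g, g ∈ M ∧ zinj g (ordToZF β) x) ∧
      (∃ f, f ∈ M ∧ zsurj f (ordToZF α) (ZFSet.sep (fun z => z ∈ M) (ZFSet.powerset x)))

/-- `f` codes a cofinal function from `β` into `α`. -/
def zcofinal (f : ZFSet) (β α : Ordinal) : Prop :=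
  ZFSet.IsFunc (ordToZF β) (ordToZF α) f ∧
  ∀ ξ, ξ < α → ∃ η, η < β ∧ ∃ ζ, ξ ≤ ζ ∧ ζ < α ∧ ZFSet.pair (ordToZF η) (ordToZF ζ) ∈ f

/-- The cofinality of `α` as computed (via coded functions) in the model `M`. -/
noncomputable def cofIn (M : ZFSet) (α : Ordinal) : Ordinal :=
  sInf {β | ∃ f, f ∈ M ∧ zcofinal f β α}

/-- Passing from `M` to `N` preserves all cofinalities. -/
def CofPreserving (M N : ZFSet) : Prop :=
  ∀ α : Ordinal, ordToZF α ∈ M → cofIn M α = cofIn N α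

end Paper
namespace Paper

/-! ### The forcing `Q(γ, W)` to add a non-reflecting weakly compact set -/

/-- A condition in the forcing `Q(γ, W)`: a function `p : dom(p) → 2` with `dom(p) < γ`,
coded by its support `{α : p(α) = 1} ⊆ W`, such that for every weakly compact `η ≤ dom(p)`
the set `{α < η : p(α) = 1}` is not a weakly compact subset of `η`. -/
structure QCond (γ : Ordinal) (W : Set Ordinal) : Type 1 where
  dom : Ordinal
  supp : Set Ordinal
  dom_lt : dom < γ
  supp_sub : supp ⊆ W ∩ Set.Iio dom
  not_wc : ∀ η, η ≤ dom → WCCard η → ¬ WCSet η (supp ∩ Set.Iio η)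

/-- The extension order on `Q(γ, W)`: `p ≤ q` iff `p ⊇ q` as functions. -/
def QLe {γ : Ordinal} {W : Set Ordinal} (p q : QCond γ W) : Prop :=
  q.dom ≤ p.dom ∧ p.supp ∩ Set.Iio q.dom = q.supp

/-- Player II has a winning strategy in the game of length `κ` (playing at even
stages, including limits) on a poset given by an order relation `le` on `P`. -/
def StratClosedOrd {P : Type 1} (le : P → P → Prop) (κ : Ordinal) : Prop :=
  ∃ σ : Ordinal → (Ordinal → P) → P,
    (∀ β f g, (∀ γ', γ' < β → f γ' = g γ') → σ β f = σ β g) ∧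
    ∀ α, α < κ → EvenOrd α → ∀ f : Ordinal → P,
      (∀ β γ', β ≤ γ' → γ' < α → le (f γ') (f β)) →
      (∀ β, β < α → EvenOrd β → f β = σ β f) →
      ∀ β, β < α → le (σ α f) (f β)

/-! ### Clubs, stationarity, 1-closed sets, and the poset `T¹(X)` -/

/-- `C` is a club (closed unbounded) subset of `α`. -/
def IsClubIn (α : Ordinal) (C : Set Ordinal) : Prop :=
  C ⊆ Set.Iio α ∧
  (∀ β, β < α → ∃ ξ ∈ C, β ≤ ξ) ∧
  (∀ β, β < α → 0 < β → (∀ δ, δ < β → ∃ ξ ∈ C, δ ≤ ξ ∧ ξ < β) → β ∈ C)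

/-- `S` is a stationary subset of `α`. -/
def StatIn (α : Ordinal) (S : Set Ordinal) : Prop :=
  ∀ C : Set Ordinal, IsClubIn α C → (S ∩ C).Nonempty

/-- `c` is `1`-closed: it contains every `β` such that `c ∩ β` is stationary in `β`. -/
def OneClosed (c : Set Ordinal) : Prop :=
  ∀ β : Ordinal, StatIn β (c ∩ Set.Iio β) → β ∈ c

/-- A condition of the two-step iteration `Q(γ, W) ∗ Ṫ¹(γ \ Ė)` (in reduced form):
a condition `e ∈ Q(γ, W)` together with a bounded `1`-closed set `c` which `e` forces
to be disjoint from the generic set `Ė`. -/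
structure QTCond (γ : Ordinal) (W : Set Ordinal) : Type 1 where
  e : QCond γ W
  c : Set Ordinal
  c_sub : c ⊆ Set.Iio e.dom
  c_disj : c ∩ e.supp = ∅
  c_closed : ∀ β, β < γ → StatIn β (c ∩ Set.Iio β) → β ∈ c

/-- The order on the two-step iteration: extension in the first coordinate and
end-extension in the second. -/
def QTLe {γ : Ordinal} {W : Set Ordinal} (p q : QTCond γ W) : Prop :=
  QLe p.e q.e ∧ q.c ⊆ p.c ∧ ∀ ξ ∈ p.c, ξ ∉ q.c → ∀ ζ ∈ q.c, ζ < ξ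

/-- A condition of the Cohen forcing `Add(γ, 1)`: a partial function `γ ⇀ 2`
of size `< γ`. -/
structure AddCond (γ : Ordinal) : Type 1 where
  f : Ordinal → Option Bool
  dom_sub : ∀ α, (f α).isSome → α < γ
  small : Cardinal.mk {α | (f α).isSome} < Cardinal.lift.{1, 0} γ.card

/-- The extension order on `Add(γ, 1)`. -/
def AddLe {γ : Ordinal} (p q : AddCond γ) : Prop :=
  ∀ α, (q.f α).isSome → p.f α = q.f α

/-- Forcing equivalence of two posets: they have isomorphic dense subsets. -/
def ForcingEquivalent {P : Type 1} {Q : Type 1} (lp : P → P → Prop) (lq : Q → Q → Prop) : Prop :=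
  ∃ (D₁ : Set P) (D₂ : Set Q),
    (∀ p : P, ∃ d ∈ D₁, lp d p) ∧ (∀ q : Q, ∃ d ∈ D₂, lq d q) ∧
    ∃ e : D₁ ≃ D₂, ∀ a b : D₁, lp a.1 b.1 ↔ lq (e a).1 (e b).1

end Paper
namespace Paper

/-- The pair `M ⊆ N` satisfies the `δ`-approximation property. -/
def ApproxProperty (δ : Ordinal) (M N : ZFSet) : Prop :=
  ∀ A, A ∈ N → A ⊆ M →
    (∀ a, a ∈ M → Cardinal.mk a.toSet < Cardinal.lift.{1, 0} δ.card → (A ∩ a : ZFSet) ∈ M) →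
    A ∈ M

/-- The pair `M ⊆ N` satisfies the `δ`-cover property. -/
def CoverProperty (δ : Ordinal) (M N : ZFSet) : Prop :=
  ∀ A, A ∈ N → A ⊆ M → Cardinal.mk A.toSet < Cardinal.lift.{1, 0} δ.card →
    ∃ B, B ∈ M ∧ A ⊆ B ∧ Cardinal.mk B.toSet < Cardinal.lift.{1, 0} δ.card

end Paper
namespace Paper

lemma mem_Vrank {o : Ordinal.{0}} {x : ZFSet.{0}} :
    x ∈ Vrank o ↔ ∃ β < o, x ⊆ Vrank β := by
  rw [Vrank]
  simp only [ZFSet.mem_sUnion, ZFSet.mem_range]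
  constructor
  · rintro ⟨y, ⟨i, rfl⟩, hx⟩
    exact ⟨((@Ordinal.ToType.mk o).symm i).1, ((@Ordinal.ToType.mk o).symm i).2, by simpa using hx⟩
  · rintro ⟨β, hβ, hx⟩
    exact ⟨_, ⟨@Ordinal.ToType.mk o ⟨β, hβ⟩, rfl⟩, by simpa using hx⟩

lemma Vrank_mono {β α : Ordinal.{0}} (h : β ≤ α) : Vrank β ⊆ Vrank α := fun _ hx =>
  let ⟨γ, hγ, hsub⟩ := mem_Vrank.1 hx
  mem_Vrank.2 ⟨γ, hγ.trans_le h, hsub⟩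

lemma inter_Vrank_inter_Vrank_of_le (A : ZFSet.{0}) {β α : Ordinal.{0}} (h : β ≤ α) :
    A ∩ Vrank α ∩ Vrank β = A ∩ Vrank β := by
  ext x
  simp only [ZFSet.mem_inter]
  exact ⟨fun ⟨⟨hA, _⟩, hβ⟩ => ⟨hA, hβ⟩, fun ⟨hA, hβ⟩ => ⟨⟨hA, Vrank_mono h hβ⟩, hβ⟩⟩

theorem PiIndescribable.of_forall_mem {n : ℕ} {κ : Ordinal} {S Z : Set Ordinal}
    (hS : PiIndescribable n κ S) (hZ : ∀ α ∈ S, PiIndescribable n α (Z ∩ Set.Iio α)) :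
    PiIndescribable n κ Z := by
  intro A _ hA φ hφ hκφ
  obtain ⟨α, hαS, hακ, hαφ⟩ := hS A trivial hA φ hφ hκφ
  obtain ⟨β, ⟨hβZ, hβα⟩, -, hβφ⟩ :=
    hZ α hαS (A ∩ Vrank α) trivial (fun _ hx => (ZFSet.mem_inter.1 hx).2) φ hφ hαφ
  rw [inter_Vrank_inter_Vrank_of_le A hβα.le] at hβφ
  exact ⟨β, hβZ, hβα.trans hακ, hβφ⟩

theorem trace_of_null_is_null_general {n : ℕ} {κ : Ordinal}
    {Z : Set Ordinal} (hZ : ¬ PiIndescribable n κ Z) :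
    ¬ PiIndescribable n κ (Tr n κ Z) :=
  fun hTr => hZ (hTr.of_forall_mem fun _ hα => hα.2)

/-- If `κ` is a `Π¹ₙ`-indescribable cardinal and `Z ⊆ κ` belongs to the
`Π¹ₙ`-indescribable ideal, then its trace `Trₙ(Z)` also belongs to the ideal. -/
theorem trace_of_null_is_null {n : ℕ} {κ : Ordinal} (hκ : PiIndCard n κ)
    {Z : Set Ordinal} (hZsub : Z ⊆ Set.Iio κ) (hZ : ¬ PiIndescribable n κ Z) :
    ¬ PiIndescribable n κ (Tr n κ Z) :=
  trace_of_null_is_null_general hZ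

end Paper
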